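/- arXiv:2312.00355 — 4 statements merged into one kernel-verified Lean document; each statement's English description precedes it below -/
import Mathlib

section
/- If two plactic biwords Q and Q' are connected by a single generalized Knuth relation, then for every positive integer i, the biwords Q_{>i} and Q'_{>i} (obtained by removing all biletters with top entry at most i) are either equal or connected by a single generalized Knuth relation. -/
/-- A biletter is a pair `(a, k)` of positive integers with `a ≤ k`. -/
def Biletter (p : ℕ × ℕ) : Prop := 1 ≤ p.1 ∧ p.1 ≤ p.2

/-- A plactic biword: a word of biletters with weakly decreasing bottom row. -/
def Plactic (Q : List (ℕ × ℕ)) : Prop :=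
  (∀ p ∈ Q, Biletter p) ∧ (Q.map Prod.snd).Pairwise (· ≥ ·)

/-- One application of a generalized Knuth relation (both sides must be plactic). -/
inductive KnuthStep : List (ℕ × ℕ) → List (ℕ × ℕ) → Prop
  | rel1 (u v : List (ℕ × ℕ)) (a b c k : ℕ) (h1 : a < b) (h2 : b ≤ c)
      (hL : Plactic (u ++ [(b,k),(a,k),(c,k)] ++ v))
      (hR : Plactic (u ++ [(b,k),(c,k),(a,k)] ++ v)) :
      KnuthStep (u ++ [(b,k),(a,k),(c,k)] ++ v) (u ++ [(b,k),(c,k),(a,k)] ++ v)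
  | rel2 (u v : List (ℕ × ℕ)) (a b c k : ℕ) (h1 : a ≤ b) (h2 : b < c)
      (hL : Plactic (u ++ [(a,k),(c,k),(b,k)] ++ v))
      (hR : Plactic (u ++ [(c,k),(a,k),(b,k)] ++ v)) :
      KnuthStep (u ++ [(a,k),(c,k),(b,k)] ++ v) (u ++ [(c,k),(a,k),(b,k)] ++ v)
  | rel3 (u v : List (ℕ × ℕ)) (a b k : ℕ) (h : a ≤ b)
      (hL : Plactic (u ++ [(a,k),(b,k)] ++ v))
      (hR : Plactic (u ++ [(a,k+1),(b,k)] ++ v)) :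
      KnuthStep (u ++ [(a,k),(b,k)] ++ v) (u ++ [(a,k+1),(b,k)] ++ v)
  | rel4 (u v : List (ℕ × ℕ)) (a b k : ℕ) (h : a < b)
      (hL : Plactic (u ++ [(b,k+1),(a,k+1)] ++ v))
      (hR : Plactic (u ++ [(b,k+1),(a,k)] ++ v)) :
      KnuthStep (u ++ [(b,k+1),(a,k+1)] ++ v) (u ++ [(b,k+1),(a,k)] ++ v)

/-- Two biwords are connected by a single generalized Knuth relation. -/
def KnuthRel (Q Q' : List (ℕ × ℕ)) : Prop := KnuthStep Q Q' ∨ KnuthStep Q' Q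

/-- Connected by a finite chain of generalized Knuth relations. -/
def KnuthEquiv : List (ℕ × ℕ) → List (ℕ × ℕ) → Prop := Relation.ReflTransGen KnuthRel

/-- `Q_{>i}`: remove all biletters with top entry at most `i`. -/
def after (i : ℕ) (Q : List (ℕ × ℕ)) : List (ℕ × ℕ) := Q.filter (fun p => i < p.1)

/-! In each relation every moved biletter has top entry at least the smallest one, `a`.
If `a ≤ i`, deleting the small biletters removes `(a, _)` and makes both sides equal; otherwise
all moved biletters survive and the same relation holds in the filtered context, which is still
plactic. -/

theorem Plactic.sublist {Q R : List (ℕ × ℕ)} (h : Plactic Q) (hRQ : R.Sublist Q) : Plactic R :=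
  ⟨fun p hp => h.1 p (hRQ.subset hp), h.2.sublist (hRQ.map _)⟩

theorem Plactic.after {Q : List (ℕ × ℕ)} (h : Plactic Q) (i : ℕ) : Plactic (after i Q) :=
  h.sublist List.filter_sublist

theorem after_append_append_of_forall_lt {i : ℕ} {w : List (ℕ × ℕ)}
    (hw : ∀ p ∈ w, i < p.1) (u v : List (ℕ × ℕ)) :
    after i (u ++ w ++ v) = after i u ++ w ++ after i v := by
  have hww : w.filter (fun p => i < p.1) = w := List.filter_eq_self.2 (by simpa using hw)
  simp only [after, List.filter_append, hww]

theorem KnuthStep.after_of_forall_lt {i : ℕ} {u v w w' : List (ℕ × ℕ)}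
    (hw : ∀ p ∈ w, i < p.1) (hw' : ∀ p ∈ w', i < p.1)
    (step : ∀ u' v', Plactic (u' ++ w ++ v') → Plactic (u' ++ w' ++ v') →
      KnuthStep (u' ++ w ++ v') (u' ++ w' ++ v'))
    (hL : Plactic (u ++ w ++ v)) (hR : Plactic (u ++ w' ++ v)) :
    KnuthStep (after i (u ++ w ++ v)) (after i (u ++ w' ++ v)) := by
  have e := after_append_append_of_forall_lt hw u v
  have e' := after_append_append_of_forall_lt hw' u v
  rw [e, e']
  exact step _ _ (e ▸ hL.after i) (e' ▸ hR.after i)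

theorem KnuthStep.after {Q Q' : List (ℕ × ℕ)} (hs : KnuthStep Q Q') (i : ℕ) :
    after i Q = after i Q' ∨ KnuthStep (after i Q) (after i Q') := by
  cases hs with
  | rel1 u v a b c k hab hbc hL hR =>
    by_cases hia : i < a
    · exact .inr <|
        after_of_forall_lt (by simp; omega) (by simp; omega) (rel1 · · a b c k hab hbc) hL hR
    · simp [_root_.after, List.filter_append, List.filter_cons, hia]
  | rel2 u v a b c k hab hbc hL hR =>
    by_cases hia : i < a
    · exact .inr <|
        after_of_forall_lt (by simp; omega) (by simp; omega) (rel2 · · a b c k hab hbc) hL hR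
    · simp [_root_.after, List.filter_append, List.filter_cons, hia]
  | rel3 u v a b k hab hL hR =>
    by_cases hia : i < a
    · exact .inr <|
        after_of_forall_lt (by simp; omega) (by simp; omega) (rel3 · · a b k hab) hL hR
    · simp [_root_.after, List.filter_append, List.filter_cons, hia]
  | rel4 u v a b k hab hL hR =>
    by_cases hia : i < a
    · exact .inr <|
        after_of_forall_lt (by simp; omega) (by simp; omega) (rel4 · · a b k hab) hL hR
    · simp [_root_.after, List.filter_append, List.filter_cons, hia]

theorem single_knuth_relation_restricts_general (Q Q' : List (ℕ × ℕ)) (h : KnuthRel Q Q')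
    (i : ℕ) :
    after i Q = after i Q' ∨ KnuthRel (after i Q) (after i Q') := by
  rcases h with hs | hs
  · exact (hs.after i).imp id .inl
  · exact (hs.after i).imp Eq.symm .inr

theorem single_knuth_relation_restricts (Q Q' : List (ℕ × ℕ)) (h : KnuthRel Q Q')
    (i : ℕ) (hi : 1 ≤ i) :
    after i Q = after i Q' ∨ KnuthRel (after i Q) (after i Q') :=
  single_knuth_relation_restricts_general Q Q' h i
end

section
/- If two plactic biwords Q and Q' are connected by a finite chain of generalized Knuth relations, then for every positive integer i, Q_{>i} and Q'_{>i} are connected by a finite chain of generalized Knuth relations (where equality counts as a chain of length zero). -/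
lemma plactic_after {Q : List (ℕ × ℕ)} (hQ : Plactic Q) (i : ℕ) : Plactic (after i Q) := by
  obtain ⟨h1, h2⟩ := hQ
  refine ⟨fun p hp => h1 p ((List.filter_sublist : List.Sublist (Q.filter (fun p => i < p.1)) Q).subset hp), ?_⟩
  exact List.Pairwise.sublist ((List.filter_sublist : List.Sublist (Q.filter (fun p => i < p.1)) Q).map Prod.snd) h2

lemma knuthStep_after {Q Q' : List (ℕ × ℕ)} (h : KnuthStep Q Q') (i : ℕ) :
    KnuthEquiv (after i Q) (after i Q') := by
  cases h with
  | rel1 u v a b c k h1 h2 hL hR =>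
    by_cases ha : i < a
    · have hab : i < b := ha.trans h1
      have hac : i < c := lt_of_lt_of_le hab h2
      have eL : after i (u ++ [(b,k),(a,k),(c,k)] ++ v)
          = after i u ++ [(b,k),(a,k),(c,k)] ++ after i v := by
        simp [after, List.filter_append, List.filter_cons, ha, hab, hac]
      have eR : after i (u ++ [(b,k),(c,k),(a,k)] ++ v)
          = after i u ++ [(b,k),(c,k),(a,k)] ++ after i v := by
        simp [after, List.filter_append, List.filter_cons, ha, hab, hac]
      rw [eL, eR]
      exact Relation.ReflTransGen.single (Or.inl
        (KnuthStep.rel1 _ _ a b c k h1 h2 (eL ▸ plactic_after hL i) (eR ▸ plactic_after hR i)))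
    · have e : after i (u ++ [(b,k),(a,k),(c,k)] ++ v)
          = after i (u ++ [(b,k),(c,k),(a,k)] ++ v) := by
        simp [after, List.filter_append, List.filter_cons, ha]
      rw [e]
      exact Relation.ReflTransGen.refl
  | rel2 u v a b c k h1 h2 hL hR =>
    by_cases ha : i < a
    · have hab : i < b := lt_of_lt_of_le ha h1
      have hac : i < c := hab.trans h2
      have eL : after i (u ++ [(a,k),(c,k),(b,k)] ++ v)
          = after i u ++ [(a,k),(c,k),(b,k)] ++ after i v := by
        simp [after, List.filter_append, List.filter_cons, ha, hab, hac]
      have eR : after i (u ++ [(c,k),(a,k),(b,k)] ++ v)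
          = after i u ++ [(c,k),(a,k),(b,k)] ++ after i v := by
        simp [after, List.filter_append, List.filter_cons, ha, hab, hac]
      rw [eL, eR]
      exact Relation.ReflTransGen.single (Or.inl
        (KnuthStep.rel2 _ _ a b c k h1 h2 (eL ▸ plactic_after hL i) (eR ▸ plactic_after hR i)))
    · have e : after i (u ++ [(a,k),(c,k),(b,k)] ++ v)
          = after i (u ++ [(c,k),(a,k),(b,k)] ++ v) := by
        simp [after, List.filter_append, List.filter_cons, ha]
      rw [e]
      exact Relation.ReflTransGen.refl
  | rel3 u v a b k hab hL hR =>
    by_cases ha : i < a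
    · have hb : i < b := lt_of_lt_of_le ha hab
      have eL : after i (u ++ [(a,k),(b,k)] ++ v)
          = after i u ++ [(a,k),(b,k)] ++ after i v := by
        simp [after, List.filter_append, List.filter_cons, ha, hb]
      have eR : after i (u ++ [(a,k+1),(b,k)] ++ v)
          = after i u ++ [(a,k+1),(b,k)] ++ after i v := by
        simp [after, List.filter_append, List.filter_cons, ha, hb]
      rw [eL, eR]
      exact Relation.ReflTransGen.single (Or.inl
        (KnuthStep.rel3 _ _ a b k hab (eL ▸ plactic_after hL i) (eR ▸ plactic_after hR i)))
    · have e : after i (u ++ [(a,k),(b,k)] ++ v)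
          = after i (u ++ [(a,k+1),(b,k)] ++ v) := by
        simp [after, List.filter_append, List.filter_cons, ha]
      rw [e]
      exact Relation.ReflTransGen.refl
  | rel4 u v a b k hab hL hR =>
    by_cases ha : i < a
    · have hb : i < b := ha.trans hab
      have eL : after i (u ++ [(b,k+1),(a,k+1)] ++ v)
          = after i u ++ [(b,k+1),(a,k+1)] ++ after i v := by
        simp [after, List.filter_append, List.filter_cons, ha, hb]
      have eR : after i (u ++ [(b,k+1),(a,k)] ++ v)
          = after i u ++ [(b,k+1),(a,k)] ++ after i v := by
        simp [after, List.filter_append, List.filter_cons, ha, hb]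
      rw [eL, eR]
      exact Relation.ReflTransGen.single (Or.inl
        (KnuthStep.rel4 _ _ a b k hab (eL ▸ plactic_after hL i) (eR ▸ plactic_after hR i)))
    · have e : after i (u ++ [(b,k+1),(a,k+1)] ++ v)
          = after i (u ++ [(b,k+1),(a,k)] ++ v) := by
        simp [after, List.filter_append, List.filter_cons, ha]
      rw [e]
      exact Relation.ReflTransGen.refl

lemma knuthEquiv_symm {Q Q' : List (ℕ × ℕ)} (h : KnuthEquiv Q Q') : KnuthEquiv Q' Q := by
  induction h with
  | refl => exact Relation.ReflTransGen.refl
  | tail _ h2 ih => exact Relation.ReflTransGen.head (Or.symm h2) ih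

theorem knuth_equiv_restricts (Q Q' : List (ℕ × ℕ)) (h : KnuthEquiv Q Q')
    (i : ℕ) (hi : 1 ≤ i) :
    KnuthEquiv (after i Q) (after i Q') := by
  induction h with
  | refl => exact Relation.ReflTransGen.refl
  | tail _ h2 ih =>
      refine ih.trans ?_
      rcases h2 with s | s
      · exact knuthStep_after s i
      · exact knuthEquiv_symm (knuthStep_after s i)
end

section
/- The biwords ((1,3),(3,3),(2,3)) and ((1,3),(3,3),(2,2)) are connected by a generalized Knuth relation, but the biwords ((1,3),(2,3)) and ((1,3),(2,2)), obtained from them by removing the biletter with top entry 3, are not connected by any chain of generalized Knuth relations. -/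
/-! The first pair is an instance of relation (4). For the second: relations (1) and (2) need three
letters and (4) needs a descent in the top row, so a two-letter biword `(a,k)(b,l)` with `a ≤ b` is
related only by (3), which changes nothing but `k`. Hence every biword Knuth equivalent to
`(1,3)(2,3)` still ends in `(2,3)`. -/

theorem KnuthStep.length_eq {Q Q' : List (ℕ × ℕ)} (h : KnuthStep Q Q') :
    Q'.length = Q.length := by
  cases h <;> simp

theorem KnuthStep.of_length_two {Q Q' : List (ℕ × ℕ)} (h : KnuthStep Q Q')
    (hQ : Q.length = 2) :
    (∃ a b k, a ≤ b ∧ Q = [(a,k),(b,k)] ∧ Q' = [(a,k+1),(b,k)]) ∨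
    (∃ a b k, a < b ∧ Q = [(b,k+1),(a,k+1)] ∧ Q' = [(b,k+1),(a,k)]) := by
  cases h with
  | rel1 u v => simp only [List.length_append, List.length_cons, List.length_nil] at hQ; omega
  | rel2 u v => simp only [List.length_append, List.length_cons, List.length_nil] at hQ; omega
  | rel3 u v a b k hab =>
    obtain ⟨rfl, rfl⟩ : u = [] ∧ v = [] := by
      simp only [← List.length_eq_zero_iff]
      simp only [List.length_append, List.length_cons, List.length_nil] at hQ
      omega
    exact Or.inl ⟨a, b, k, hab, rfl, rfl⟩
  | rel4 u v a b k hab =>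
    obtain ⟨rfl, rfl⟩ : u = [] ∧ v = [] := by
      simp only [← List.length_eq_zero_iff]
      simp only [List.length_append, List.length_cons, List.length_nil] at hQ
      omega
    exact Or.inr ⟨a, b, k, hab, rfl, rfl⟩

theorem KnuthRel.exists_eq_of_pair {a k : ℕ} {y : ℕ × ℕ} {Q : List (ℕ × ℕ)}
    (h : KnuthRel [(a,k), y] Q) (hay : a ≤ y.1) : ∃ k', Q = [(a,k'), y] := by
  rcases h with h | h
  · rcases h.of_length_two rfl with ⟨b, c, j, -, hQ, rfl⟩ | ⟨b, c, j, hbc, hQ, rfl⟩ <;>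
      simp only [List.cons.injEq, Prod.mk.injEq, and_true] at hQ <;>
      obtain ⟨⟨rfl, rfl⟩, rfl⟩ := hQ
    · exact ⟨_, rfl⟩
    · exact absurd hay (Nat.not_le_of_lt hbc)
  · rcases h.of_length_two h.length_eq.symm with
      ⟨b, c, j, -, rfl, hQ⟩ | ⟨b, c, j, hbc, rfl, hQ⟩ <;>
      simp only [List.cons.injEq, Prod.mk.injEq, and_true] at hQ <;>
      obtain ⟨⟨rfl, rfl⟩, rfl⟩ := hQ
    · exact ⟨_, rfl⟩
    · exact absurd hay (Nat.not_le_of_lt hbc)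

theorem KnuthEquiv.exists_eq_of_pair {a k : ℕ} {y : ℕ × ℕ} {Q : List (ℕ × ℕ)}
    (h : KnuthEquiv [(a,k), y] Q) (hay : a ≤ y.1) : ∃ k', Q = [(a,k'), y] := by
  induction h with
  | refl => exact ⟨k, rfl⟩
  | tail _ hstep ih =>
    obtain ⟨k', rfl⟩ := ih
    exact hstep.exists_eq_of_pair hay

theorem knuth_removal_below_counterexample :
    KnuthRel [(1,3),(3,3),(2,3)] [(1,3),(3,3),(2,2)] ∧
    ¬ KnuthEquiv [(1,3),(2,3)] [(1,3),(2,2)] := by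
  refine ⟨Or.inl ?_, fun h => ?_⟩
  · exact KnuthStep.rel4 [(1,3)] [] 2 3 2 (by omega)
      ⟨by simp [Biletter], by simp⟩ ⟨by simp [Biletter], by simp⟩
  · obtain ⟨k, hk⟩ := h.exists_eq_of_pair (by decide)
    simp at hk
end

section
/- Let π be a finitely supported permutation of positive integers whose first descent is at position ≥ k, and let α < β with π⁻¹(α) ≤ k < π⁻¹(β) and ℓ(t_{αβ}π) = ℓ(π) + 1. Then σ = t_{αβ}π satisfies: σ⁻¹(β) ≤ k < σ⁻¹(α), and ℓ(σ) = ℓ(π) + 1, and there is at most one position p ≤ k with σ(p) > σ(p+1) — namely p = σ⁻¹(β) if σ⁻¹(β) < k or p = k. -/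
/-- A permutation of the positive integers (modeled inside `ℕ`) that is the
identity outside a finite set. -/
def FinSupp (π : Equiv.Perm ℕ) : Prop := {n | π n ≠ n}.Finite

/-- Coxeter length: the number of inversions. -/
noncomputable def len (π : Equiv.Perm ℕ) : ℕ :=
  {p : ℕ × ℕ | p.1 < p.2 ∧ π p.2 < π p.1}.ncard

lemma inv_finite {π : Equiv.Perm ℕ} (h : FinSupp π) :
    {p : ℕ × ℕ | p.1 < p.2 ∧ π p.2 < π p.1}.Finite := by
  obtain ⟨M, hM⟩ := h.bddAbove
  apply Set.Finite.subset ((Set.finite_Iic M).prod (Set.finite_Iic M))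
  rintro ⟨i, j⟩ ⟨hij, hinv⟩
  simp only [Set.mem_setOf_eq] at hij hinv
  have key : j ≤ M := by
    by_cases hj : π j = j
    · have hi : π (π i) ≠ π i := by
        intro e
        have := π.injective e
        omega
      have := hM hi
      omega
    · exact hM hj
  exact ⟨by simpa using le_trans (le_of_lt hij) key, by simpa using key⟩

lemma finsupp_swap_mul {π : Equiv.Perm ℕ} (h : FinSupp π) (α β : ℕ) :
    FinSupp (Equiv.swap α β * π) := by
  apply Set.Finite.subset (h.union ((Set.finite_singleton β).insert α))
  intro n hn
  simp only [Set.mem_setOf_eq, Equiv.Perm.mul_apply] at hn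
  by_cases h1 : π n = n
  · right
    rw [h1] at hn
    by_contra hc
    simp only [Set.mem_insert_iff, Set.mem_singleton_iff, not_or] at hc
    exact hn (Equiv.swap_apply_of_ne_of_ne hc.1 hc.2)
  · exact Or.inl h1

lemma len_ge_of_between {π : Equiv.Perm ℕ} (hπ : FinSupp π) {a b x α β : ℕ}
    (ha : π a = α) (hb : π b = β) (hax : a < x) (hxb : x < b)
    (hx1 : α < π x) (hx2 : π x < β) :
    ¬ ({p : ℕ × ℕ | p.1 < p.2 ∧ (Equiv.swap α β * π) p.2 < (Equiv.swap α β * π) p.1}.ncard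
      = {p : ℕ × ℕ | p.1 < p.2 ∧ π p.2 < π p.1}.ncard + 1) := by
  classical
  set σ := Equiv.swap α β * π with hσdef
  set S := {p : ℕ × ℕ | p.1 < p.2 ∧ π p.2 < π p.1} with hS
  set T := {p : ℕ × ℕ | p.1 < p.2 ∧ σ p.2 < σ p.1} with hT
  have hαβ : α < β := hx1.trans hx2
  have hna : ∀ n, π n = α → n = a := by
    intro n hn; apply π.injective; rw [hn, ha]
  have hnb : ∀ n, π n = β → n = b := by
    intro n hn; apply π.injective; rw [hn, hb]
  have hσa : σ a = β := by
    simp [hσdef, Equiv.Perm.mul_apply, ha]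
  have hσb : σ b = α := by
    simp [hσdef, Equiv.Perm.mul_apply, hb]
  have hσn : ∀ n, n ≠ a → n ≠ b → σ n = π n := by
    intro n h1 h2
    simp only [hσdef, Equiv.Perm.mul_apply]
    apply Equiv.swap_apply_of_ne_of_ne
    · intro e; exact h1 (hna n e)
    · intro e; exact h2 (hnb n e)
  have hab : a < b := hax.trans hxb
  have hxa : x ≠ a := by omega
  have hxbne : x ≠ b := by omega
  set g : ℕ × ℕ → ℕ × ℕ := fun p =>
    if p.2 = a ∧ α < π p.1 ∧ π p.1 < β then (p.1, b)
    else if p.1 = b ∧ α < π p.2 ∧ π p.2 < β then (a, p.2)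
    else p with hg
  have hgval : ∀ i j : ℕ, g (i, j) =
      if j = a ∧ α < π i ∧ π i < β then (i, b)
      else if i = b ∧ α < π j ∧ π j < β then (a, j)
      else (i, j) := fun i j => rfl
  have memS : ∀ i j : ℕ, ((i, j) : ℕ × ℕ) ∈ S ↔ i < j ∧ π j < π i := by
    intro i j; rfl
  have memT : ∀ i j : ℕ, ((i, j) : ℕ × ℕ) ∈ T ↔ i < j ∧ σ j < σ i := by
    intro i j; rfl
  have hmap : ∀ p ∈ S, g p ∈ T := by
    rintro ⟨i, j⟩ hmemS
    rw [memS] at hmemS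
    obtain ⟨hij, hinv⟩ := hmemS
    rw [hgval]
    by_cases c1 : j = a ∧ α < π i ∧ π i < β
    · rw [if_pos c1, memT]
      obtain ⟨hja, hi1, hi2⟩ := c1
      have hia : i ≠ a := by omega
      have hib' : i ≠ b := by omega
      constructor
      · omega
      · rw [hσb, hσn i hia hib']; exact hi1
    · rw [if_neg c1]
      by_cases c2 : i = b ∧ α < π j ∧ π j < β
      · rw [if_pos c2, memT]
        obtain ⟨hib, hj1, hj2⟩ := c2
        have hja : j ≠ a := by omega
        have hjb : j ≠ b := by omega
        constructor
        · omega
        · rw [hσa, hσn j hja hjb]; exact hj2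
      · rw [if_neg c2, memT]
        refine ⟨hij, ?_⟩
        by_cases hia : i = a
        · have hja : j ≠ a := by omega
          have hjb : j ≠ b := by
            intro e; rw [e, hb] at hinv; rw [hia, ha] at hinv; omega
          rw [hia, hσa, hσn j hja hjb]
          rw [hia, ha] at hinv; omega
        · by_cases hib : i = b
          · have hja : j ≠ a := by omega
            have hjb : j ≠ b := by omega
            rw [hib, hσb, hσn j hja hjb]
            rw [hib, hb] at hinv
            have h3 : ¬ (α < π j) := fun hc => c2 ⟨hib, hc, hinv⟩
            have h4 : π j ≠ α := fun e => hja (hna j e)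
            omega
          · by_cases hja : j = a
            · rw [hja, hσa, hσn i hia hib]
              rw [hja, ha] at hinv
              have h3 : ¬ (π i < β) := fun hc => c1 ⟨hja, hinv, hc⟩
              have h4 : π i ≠ β := fun e => hib (hnb i e)
              omega
            · by_cases hjb : j = b
              · rw [hjb, hσb, hσn i hia hib]
                rw [hjb, hb] at hinv
                omega
              · rw [hσn i hia hib, hσn j hja hjb]
                exact hinv
  have hinj : Set.InjOn g S := by
    rintro ⟨i, j⟩ hm ⟨i', j'⟩ hm' he
    rw [memS] at hm hm'
    obtain ⟨hij, hinv⟩ := hm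
    obtain ⟨hij', hinv'⟩ := hm'
    rw [hgval, hgval] at he
    by_cases c1 : j = a ∧ α < π i ∧ π i < β <;>
      by_cases c1' : j' = a ∧ α < π i' ∧ π i' < β
    · rw [if_pos c1, if_pos c1'] at he
      obtain ⟨e1, e2⟩ := Prod.ext_iff.mp he
      simp only at e1 e2
      exact Prod.ext e1 (c1.1.trans c1'.1.symm)
    · rw [if_pos c1, if_neg c1'] at he
      by_cases c2' : i' = b ∧ α < π j' ∧ π j' < β
      · rw [if_pos c2'] at he
        obtain ⟨e1, e2⟩ := Prod.ext_iff.mp he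
        simp only at e1 e2
        -- i = a, b = j' : but i < j = a
        exfalso; omega
      · rw [if_neg c2'] at he
        obtain ⟨e1, e2⟩ := Prod.ext_iff.mp he
        simp only at e1 e2
        -- (i', j') = (i, b) ∈ S id: π b < π i', i.e. β < π i, but π i < β
        exfalso
        subst e1; subst e2
        rw [hb] at hinv'
        have := c1.2.2
        omega
    · rw [if_neg c1, if_pos c1'] at he
      by_cases c2 : i = b ∧ α < π j ∧ π j < β
      · rw [if_pos c2] at he
        obtain ⟨e1, e2⟩ := Prod.ext_iff.mp he
        simp only at e1 e2
        exfalso; omega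
      · rw [if_neg c2] at he
        obtain ⟨e1, e2⟩ := Prod.ext_iff.mp he
        simp only at e1 e2
        exfalso
        subst e1; subst e2
        rw [hb] at hinv
        have := c1'.2.2
        omega
    · rw [if_neg c1, if_neg c1'] at he
      by_cases c2 : i = b ∧ α < π j ∧ π j < β <;>
        by_cases c2' : i' = b ∧ α < π j' ∧ π j' < β
      · rw [if_pos c2, if_pos c2'] at he
        obtain ⟨_, e2⟩ := Prod.ext_iff.mp he
        simp only at e2
        exact Prod.ext (c2.1.trans c2'.1.symm) e2
      · rw [if_pos c2, if_neg c2'] at he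
        obtain ⟨e1, e2⟩ := Prod.ext_iff.mp he
        simp only at e1 e2
        exfalso
        subst e1; subst e2
        rw [ha] at hinv'
        have := c2.2.1
        omega
      · rw [if_neg c2, if_pos c2'] at he
        obtain ⟨e1, e2⟩ := Prod.ext_iff.mp he
        simp only at e1 e2
        exfalso
        subst e1; subst e2
        rw [ha] at hinv
        have := c2'.2.1
        omega
      · rw [if_neg c2, if_neg c2'] at he
        exact he
  intro hlen
  have hSfin : S.Finite := inv_finite hπ
  have hTfin : T.Finite := inv_finite (finsupp_swap_mul hπ α β)
  have hp1T : ((a, x) : ℕ × ℕ) ∈ T := by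
    rw [memT]
    refine ⟨hax, ?_⟩
    rw [hσa, hσn x hxa hxbne]
    exact hx2
  have hp2T : ((x, b) : ℕ × ℕ) ∈ T := by
    rw [memT]
    refine ⟨hxb, ?_⟩
    rw [hσb, hσn x hxa hxbne]
    exact hx1
  have hp1ni : ((a, x) : ℕ × ℕ) ∉ g '' S := by
    rintro ⟨⟨i, j⟩, hm, he⟩
    rw [memS] at hm
    obtain ⟨hij, hinv⟩ := hm
    rw [hgval] at he
    by_cases c1 : j = a ∧ α < π i ∧ π i < β
    · rw [if_pos c1] at he
      obtain ⟨e1, e2⟩ := Prod.ext_iff.mp he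
      simp only at e1 e2
      omega
    · rw [if_neg c1] at he
      by_cases c2 : i = b ∧ α < π j ∧ π j < β
      · rw [if_pos c2] at he
        obtain ⟨e1, e2⟩ := Prod.ext_iff.mp he
        simp only at e1 e2
        have := c2.2.1
        omega
      · rw [if_neg c2] at he
        obtain ⟨e1, e2⟩ := Prod.ext_iff.mp he
        simp only at e1 e2
        subst e1; subst e2
        rw [ha] at hinv
        omega
  have hp2ni : ((x, b) : ℕ × ℕ) ∉ g '' S := by
    rintro ⟨⟨i, j⟩, hm, he⟩
    rw [memS] at hm
    obtain ⟨hij, hinv⟩ := hm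
    rw [hgval] at he
    by_cases c1 : j = a ∧ α < π i ∧ π i < β
    · rw [if_pos c1] at he
      obtain ⟨e1, e2⟩ := Prod.ext_iff.mp he
      simp only at e1 e2
      have := c1.1
      omega
    · rw [if_neg c1] at he
      by_cases c2 : i = b ∧ α < π j ∧ π j < β
      · rw [if_pos c2] at he
        obtain ⟨e1, e2⟩ := Prod.ext_iff.mp he
        simp only at e1 e2
        omega
      · rw [if_neg c2] at he
        obtain ⟨e1, e2⟩ := Prod.ext_iff.mp he
        simp only at e1 e2
        subst e1; subst e2
        rw [hb] at hinv
        omega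
  have hsub : insert ((a, x) : ℕ × ℕ) (insert (x, b) (g '' S)) ⊆ T := by
    intro p hp
    rcases hp with rfl | rfl | hp
    · exact hp1T
    · exact hp2T
    · obtain ⟨q, hq, rfl⟩ := hp
      exact hmap q hq
  have himfin : (g '' S).Finite := hSfin.image g
  have hcard1 : (insert ((x, b) : ℕ × ℕ) (g '' S)).ncard = (g '' S).ncard + 1 :=
    Set.ncard_insert_of_notMem hp2ni himfin
  have hp1ni' : ((a, x) : ℕ × ℕ) ∉ insert ((x, b) : ℕ × ℕ) (g '' S) := by
    intro hc
    rcases hc with hc | hc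
    · rw [Prod.ext_iff] at hc
      simp only at hc
      omega
    · exact hp1ni hc
  have hcard2 : (insert ((a, x) : ℕ × ℕ) (insert (x, b) (g '' S))).ncard
      = (g '' S).ncard + 2 := by
    rw [Set.ncard_insert_of_notMem hp1ni' (himfin.insert _), hcard1]
  have him : (g '' S).ncard = S.ncard := Set.ncard_image_of_injOn hinj
  have hle := Set.ncard_le_ncard hsub hTfin
  rw [hcard2, him] at hle
  omega

/-- Structure of a k-Bruhat covering step `σ = t_{αβ}π`: `σ⁻¹(β) ≤ k < σ⁻¹(α)`, the
length goes up by one, and there is at most one descent of `σ` at a position `≤ k`,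
namely at `σ⁻¹(β)` or at `k`. -/
theorem kBruhat_cover_structure (π : Equiv.Perm ℕ) (hπ : FinSupp π) (hπ0 : π 0 = 0)
    (k : ℕ) (hk : 1 ≤ k) (hdesc : ∀ p, 1 ≤ p → p < k → π p ≤ π (p + 1))
    (α β : ℕ) (hα : 1 ≤ α) (hαβ : α < β)
    (h1 : π.symm α ≤ k) (h2 : k < π.symm β)
    (hcov : len (Equiv.swap α β * π) = len π + 1) :
    (Equiv.swap α β * π).symm β ≤ k ∧ k < (Equiv.swap α β * π).symm α ∧
    len (Equiv.swap α β * π) = len π + 1 ∧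
    (∀ p, 1 ≤ p → p ≤ k → (Equiv.swap α β * π) (p + 1) < (Equiv.swap α β * π) p →
      p = (Equiv.swap α β * π).symm β ∨ p = k) ∧
    (∀ p q, 1 ≤ p → p ≤ k → 1 ≤ q → q ≤ k →
      (Equiv.swap α β * π) (p + 1) < (Equiv.swap α β * π) p →
      (Equiv.swap α β * π) (q + 1) < (Equiv.swap α β * π) q → p = q) := by
  classical
  set σ := Equiv.swap α β * π with hσdef
  set a := π.symm α with hadef
  set b := π.symm β with hbdef
  have hπa : π a = α := π.apply_symm_apply α
  have hπb : π b = β := π.apply_symm_apply β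
  have hna : ∀ n, π n = α → n = a := by
    intro n hn; apply π.injective; rw [hn, hπa]
  have hnb : ∀ n, π n = β → n = b := by
    intro n hn; apply π.injective; rw [hn, hπb]
  have hσa : σ a = β := by
    simp [hσdef, Equiv.Perm.mul_apply, hπa]
  have hσb : σ b = α := by
    simp [hσdef, Equiv.Perm.mul_apply, hπb]
  have hσn : ∀ n, n ≠ a → n ≠ b → σ n = π n := by
    intro n hn1 hn2
    simp only [hσdef, Equiv.Perm.mul_apply]
    apply Equiv.swap_apply_of_ne_of_ne
    · intro e; exact hn1 (hna n e)
    · intro e; exact hn2 (hnb n e)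
  have hsymmβ : σ.symm β = a := by rw [Equiv.symm_apply_eq]; exact hσa.symm
  have hsymmα : σ.symm α = b := by rw [Equiv.symm_apply_eq]; exact hσb.symm
  have ha1 : 1 ≤ a := by
    rcases Nat.eq_zero_or_pos a with h0 | h0
    · exfalso; rw [h0, hπ0] at hπa; omega
    · exact h0
  have classify : ∀ p, 1 ≤ p → p ≤ k → σ (p + 1) < σ p → p = a ∨ p = k := by
    intro p hp1 hpk hdes
    by_cases hpk' : p = k
    · exact Or.inr hpk'
    · left
      have hplt : p < k := by omega
      have hpb : p ≠ b := by omega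
      have hp1b : p + 1 ≠ b := by omega
      by_cases hpa : p = a
      · exact hpa
      · exfalso
        have hmono := hdesc p hp1 hplt
        by_cases hp1a : p + 1 = a
        · have hπp1 : π (p + 1) = α := by rw [hp1a, hπa]
          rw [hσn p hpa hpb, hp1a, hσa] at hdes
          omega
        · rw [hσn p hpa hpb, hσn (p + 1) hp1a hp1b] at hdes
          omega
  have hadesc : a < k → σ (a + 1) < σ a → False := by
    intro hak hdes
    have ha1b : a + 1 ≠ b := by omega
    have ha1a : a + 1 ≠ a := by omega
    rw [hσa, hσn (a + 1) ha1a ha1b] at hdes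
    have hmono := hdesc a ha1 hak
    have hne : π (a + 1) ≠ α := fun e => by have := hna (a + 1) e; omega
    have h1' : α < π (a + 1) := by omega
    exact len_ge_of_between hπ hπa hπb (Nat.lt_succ_self a) (by omega) h1' hdes hcov
  have toK : ∀ p, 1 ≤ p → p ≤ k → σ (p + 1) < σ p → p = k := by
    intro p hp1 hpk hdes
    rcases classify p hp1 hpk hdes with h | h
    · by_cases hak : a = k
      · omega
      · exact absurd (by rw [← h]; exact hdes) (fun hd => hadesc (by omega) hd)
    · exact h
  refine ⟨by rw [hsymmβ]; exact h1, by rw [hsymmα]; exact h2, hcov, ?_, ?_⟩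
  · intro p hp1 hpk hdes
    rcases classify p hp1 hpk hdes with h | h
    · exact Or.inl (by rw [hsymmβ]; exact h)
    · exact Or.inr h
  · intro p q hp1 hpk hq1 hqk hdp hdq
    rw [toK p hp1 hpk hdp, toK q hq1 hqk hdq]
end
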